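/- For every t ∈ ℝ, the limit as s → 0 (s ≠ 0) of K^B_{12}(γ(t), γ(t+s)) equals 1/(4π), where for x ≠ γ(s′) one defines K^B_{12}(x, γ(s′)) = (1/(4π))·[(r·τ(s′))² − (r·n(s′))²]/‖r‖² with r = x − γ(s′); K^B_{12} equals −G^B_{n_y n_y} + G^B_{τ_y τ_y}, i.e. the difference of the second directional derivatives of y ↦ G^B(x,y) twice in direction τ(s′) and twice in direction n(s′) (the logarithmic terms cancel). -/

import Mathlib

open Real Filter Topology MeasureTheory

noncomputable section

/-- Euclidean dot product on `ℝ × ℝ`. -/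
def dot2 (v w : ℝ × ℝ) : ℝ := v.1 * w.1 + v.2 * w.2

/-- Unit tangent vector `τ(s) = γ′(s)`. -/
def tang (γ : ℝ → ℝ × ℝ) (s : ℝ) : ℝ × ℝ := deriv γ s

/-- Unit normal vector `n(s) = (τ₂(s), −τ₁(s))`. -/
def nor (γ : ℝ → ℝ × ℝ) (s : ℝ) : ℝ × ℝ := ((deriv γ s).2, -(deriv γ s).1)

/-- Signed curvature `κ(s) = −γ″(s)·n(s)`. -/
def curv (γ : ℝ → ℝ × ℝ) (s : ℝ) : ℝ := -(dot2 (deriv (deriv γ) s) (nor γ s))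

/-- Explicit formula for `K^B_{12}(x, γ(s')) = −G^B_{n_y n_y} + G^B_{τ_y τ_y}`,
with `r = x − γ(s')`. -/
def K12B (γ : ℝ → ℝ × ℝ) (x : ℝ × ℝ) (s' : ℝ) : ℝ :=
  1 / (4 * π) * ((dot2 (x - γ s') (tang γ s')) ^ 2 - (dot2 (x - γ s') (nor γ s')) ^ 2)
    / dot2 (x - γ s') (x - γ s')

/-!
Write `γ(t) − γ(t+s) = −s · w(s)` with the difference quotient `w(s) → γ′(t)`. The kernel is
homogeneous of degree 0 in `r`, so `K^B_{12}(γ(t), γ(t+s))` is a fixed rational function of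
`(w(s), τ(t+s))`, continuous wherever its first argument is nonzero. Both arguments tend to the
unit vector `τ(t)`, and there `τ·τ = 1`, `τ·n = 0` give the value `1/(4π)`.
-/

lemma dot2_smul_left (c : ℝ) (v w : ℝ × ℝ) : dot2 (c • v) w = c * dot2 v w := by
  simp only [dot2, Prod.smul_fst, Prod.smul_snd, smul_eq_mul]; ring

lemma dot2_smul_right (c : ℝ) (v w : ℝ × ℝ) : dot2 v (c • w) = c * dot2 v w := by
  simp only [dot2, Prod.smul_fst, Prod.smul_snd, smul_eq_mul]; ring

lemma dot2_perp_self (v : ℝ × ℝ) : dot2 v (v.2, -v.1) = 0 := by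
  simp only [dot2]; ring

def biharmonicK12 (r τ : ℝ × ℝ) : ℝ :=
  1 / (4 * π) * (dot2 r τ ^ 2 - dot2 r (τ.2, -τ.1) ^ 2) / dot2 r r

lemma K12B_eq_biharmonicK12 (γ : ℝ → ℝ × ℝ) (x : ℝ × ℝ) (s' : ℝ) :
    K12B γ x s' = biharmonicK12 (x - γ s') (tang γ s') := rfl

lemma biharmonicK12_smul {c : ℝ} (hc : c ≠ 0) (r τ : ℝ × ℝ) :
    biharmonicK12 (c • r) τ = biharmonicK12 r τ := by
  simp only [biharmonicK12, dot2_smul_left, dot2_smul_right]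
  rw [show (c * dot2 r τ) ^ 2 - (c * dot2 r (τ.2, -τ.1)) ^ 2 =
      c ^ 2 * (dot2 r τ ^ 2 - dot2 r (τ.2, -τ.1) ^ 2) by ring,
    show c * (c * dot2 r r) = c ^ 2 * dot2 r r by ring,
    mul_left_comm, mul_div_mul_left _ _ (pow_ne_zero 2 hc)]

lemma biharmonicK12_self {τ : ℝ × ℝ} (hτ : dot2 τ τ = 1) :
    biharmonicK12 τ τ = 1 / (4 * π) := by
  simp [biharmonicK12, hτ, dot2_perp_self]

lemma continuousAt_biharmonicK12 {r τ : ℝ × ℝ} (hr : dot2 r r ≠ 0) :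
    ContinuousAt (fun p : (ℝ × ℝ) × (ℝ × ℝ) => biharmonicK12 p.1 p.2) (r, τ) := by
  unfold biharmonicK12 dot2
  exact ContinuousAt.div (by fun_prop) (by fun_prop) hr

lemma tendsto_biharmonicK12 {α : Type*} {l : Filter α} {r τ : α → ℝ × ℝ} {v : ℝ × ℝ}
    (hr : Tendsto r l (𝓝 v)) (hτ : Tendsto τ l (𝓝 v)) (hv : dot2 v v = 1) :
    Tendsto (fun a => biharmonicK12 (r a) (τ a)) l (𝓝 (1 / (4 * π))) := by
  have h := (continuousAt_biharmonicK12 (τ := v) (by simp [hv])).tendsto.comp (hr.prodMk_nhds hτ)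
  simpa only [Function.comp_def, biharmonicK12_self hv] using h

theorem stmt2_general (γ : ℝ → ℝ × ℝ)
    (hγ : ContDiff ℝ (⊤ : ℕ∞) γ)
    (harc : ∀ s, dot2 (deriv γ s) (deriv γ s) = 1)
    (t : ℝ) :
    Tendsto (fun s : ℝ => K12B γ (γ t) (t + s)) (𝓝[≠] (0 : ℝ))
      (𝓝 (1 / (4 * π))) := by
  set w : ℝ → ℝ × ℝ := fun s => s⁻¹ • (γ (t + s) - γ t)
  have hw : Tendsto w (𝓝[≠] 0) (𝓝 (tang γ t)) :=
    (hγ.differentiable (by simp) t).hasDerivAt.tendsto_slope_zero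
  have hτ : Tendsto (fun s => tang γ (t + s)) (𝓝[≠] 0) (𝓝 (tang γ t)) := by
    have hcont : Continuous (deriv γ) := hγ.continuous_deriv (mod_cast le_top)
    simpa [Function.comp_def, tang] using
      ((hcont.comp (continuous_const_add t)).tendsto 0).mono_left nhdsWithin_le_nhds
  have hlim := tendsto_biharmonicK12 hw hτ (harc t)
  refine hlim.congr' ?_
  filter_upwards [self_mem_nhdsWithin] with s (hs : s ≠ 0)
  have hr : γ t - γ (t + s) = (-s) • w s := by simp [w, smul_smul, hs]
  rw [K12B_eq_biharmonicK12, hr, biharmonicK12_smul (neg_ne_zero.mpr hs)]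

theorem stmt2 (L : ℝ) (hL : 0 < L) (γ : ℝ → ℝ × ℝ)
    (hγ : ContDiff ℝ (⊤ : ℕ∞) γ)
    (hper : ∀ s, γ (s + L) = γ s)
    (hinj : Set.InjOn γ (Set.Ico 0 L))
    (harc : ∀ s, dot2 (deriv γ s) (deriv γ s) = 1)
    (t : ℝ) :
    Tendsto (fun s : ℝ => K12B γ (γ t) (t + s)) (𝓝[≠] (0 : ℝ))
      (𝓝 (1 / (4 * π))) :=
  stmt2_general γ hγ harc t
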